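/- For every real r, √(kπ)/(2k+1) < (2k)!!/(2k+1)!! < √((k+1)π)/(2k+1) for all k ≥ 1. -/

import Mathlib

/-! The square of `(2k+1) · (2k)!!/(2k+1)!!` is `(2k+1)` times the `k`-th partial Wallis product
`W k`, and the Wallis bounds `(2k+1)/(2k+2) · π/2 ≤ W k ≤ π/2` squeeze it strictly between `kπ`
and `(k+1)π`. -/

open Real

/-- (2k)!! = 2^k k! -/
noncomputable def evenDF (k : ℕ) : ℝ := 2 ^ k * k.factorial

/-- (2k+1)!! = (2k+1)!/(2^k k!) -/
noncomputable def oddDF (k : ℕ) : ℝ := (2 * k + 1).factorial / (2 ^ k * k.factorial)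

namespace Real.Wallis

theorem mul_pi_lt_two_mul_add_one_mul_W (k : ℕ) : k * π < (2 * k + 1) * W k := by
  have hW := le_W k
  rw [div_mul_eq_mul_div, div_le_iff₀ (by positivity)] at hW
  nlinarith [pi_pos, W_pos k]

theorem two_mul_add_one_mul_W_lt (k : ℕ) : (2 * k + 1) * W k < (k + 1) * π := by
  nlinarith [pi_pos, W_le k]

end Real.Wallis

theorem evenDF_div_oddDF_pos (k : ℕ) : 0 < evenDF k / oddDF k := by
  unfold evenDF oddDF
  positivity

theorem sq_evenDF_div_oddDF_mul (k : ℕ) :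
    (evenDF k / oddDF k * (2 * k + 1)) ^ 2 = (2 * k + 1) * Real.Wallis.W k := by
  have hfac : ((2 * k + 1).factorial : ℝ) = (2 * k + 1) * (2 * k).factorial := by
    rw [Nat.factorial_succ]
    push_cast
    ring
  have : (0 : ℝ) < (2 * k).factorial := by positivity
  rw [Real.Wallis.W_eq_factorial_ratio, evenDF, oddDF, hfac]
  field_simp
  ring

theorem doubleFactorial_ratio_bounds (k : ℕ) :
    Real.sqrt (k * Real.pi) / (2 * k + 1) < evenDF k / oddDF k ∧
    evenDF k / oddDF k < Real.sqrt ((k + 1) * Real.pi) / (2 * k + 1) := by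
  have hpos : 0 < evenDF k / oddDF k * (2 * k + 1) :=
    mul_pos (evenDF_div_oddDF_pos k) (by positivity)
  constructor
  · rw [div_lt_iff₀ (by positivity), sqrt_lt' hpos, sq_evenDF_div_oddDF_mul]
    exact Real.Wallis.mul_pi_lt_two_mul_add_one_mul_W k
  · rw [lt_div_iff₀ (by positivity), lt_sqrt hpos.le, sq_evenDF_div_oddDF_mul]
    exact Real.Wallis.two_mul_add_one_mul_W_lt k
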